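/- Let (W, μ) be a probability space, 𝓕 a sub-σ-algebra, ξ, η ℕ-valued random variables with η being 𝓕-measurable, ϑ₀ > 0, C₀ ≥ 1, and suppose μ(ξ − η ≥ q | 𝓕) ≤ C₀ e^{−q ϑ₀} for all q ≥ 1 and ξ ≥ η a.s. Then for any Q ≥ 1, E(exp((ϑ₀/2) 𝟙_Q(ξ − η)) | 𝓕) ≤ (1 − e^{−ϑ₀/2} + C₀ e^{−Q ϑ₀/2})/(1 − e^{−ϑ₀/2}) almost surely, where 𝟙_Q(q) = q if q ≥ Q and 0 otherwise. -/

import Mathlib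

/-!
Write `ζ = ξ - η`, `θ = ϑ₀ / 2` and `r = e^{-θ}`. For `N ≥ Q`, the truncation
`min (e^{θ 𝟙_Q(ζ)}) (e^{θ N})` is bounded pointwise by `1 + ∑_{Q ≤ q ≤ N} e^{θ q} 𝟙{ζ ≥ q}`,
since it is either `1` or the single term `q = min ζ N`. Integrating over an `𝓕`-measurable
set `s` and using the conditional tail bounds gives `∫_s ≤ (1 + C₀ ∑_{q ≥ Q} r^q) μ(s)`,
monotone convergence lets `N → ∞`, and a function whose integral over every `𝓕`-measurable set
`s` is at most `c μ(s)` has conditional expectation at most `c`.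
-/

open MeasureTheory Filter Topology Finset Real

/-- Truncation `𝟙_Q` on `ℕ`: `𝟙_Q(q) = q` if `q ≥ Q`, else `0`. -/
def truncQ (Q q : ℕ) : ℕ := if Q ≤ q then q else 0

lemma le_truncQ_iff {Q q n : ℕ} (hq : Q ≤ q) : q ≤ truncQ Q n ↔ q ≤ n := by
  unfold truncQ; split_ifs <;> omega

lemma min_exp_mul_truncQ_le_one_add_sum (θ : ℝ) {Q N : ℕ} (hQN : Q ≤ N) (n : ℕ) :
    min (exp (θ * truncQ Q n)) (exp (θ * N)) ≤
      1 + ∑ q ∈ Icc Q N, exp (θ * q) * if q ≤ n then 1 else 0 := by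
  have hterm_nonneg : ∀ q ∈ Icc Q N, 0 ≤ exp (θ * q) * if q ≤ n then (1 : ℝ) else 0 :=
    fun q _ => by positivity
  have hterm_le_sum : ∀ k ∈ Icc Q N, k ≤ n →
      exp (θ * k) ≤ 1 + ∑ q ∈ Icc Q N, exp (θ * q) * if q ≤ n then 1 else 0 := fun k hk hkn => by
    have := single_le_sum hterm_nonneg hk
    rw [if_pos hkn, mul_one] at this
    linarith
  unfold truncQ
  split_ifs with hQn
  · rcases le_total n N with hnN | hNn
    · exact (min_le_left _ _).trans (hterm_le_sum n (mem_Icc.2 ⟨hQn, hnN⟩) le_rfl)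
    · exact (min_le_right _ _).trans (hterm_le_sum N (mem_Icc.2 ⟨hQN, le_rfl⟩) hNn)
  · rw [Nat.cast_zero, mul_zero, exp_zero]
    exact (min_le_left _ _).trans (le_add_of_nonneg_right (sum_nonneg hterm_nonneg))

lemma sum_Icc_exp_mul_exp_le {θ ϑ : ℝ} (hθϑ : θ < ϑ) (Q N : ℕ) :
    ∑ q ∈ Icc Q N, exp (θ * q) * exp (-(q : ℝ) * ϑ) ≤
      exp (-(ϑ - θ) * Q) / (1 - exp (-(ϑ - θ))) := by
  have hr : exp (-(ϑ - θ)) < 1 := exp_lt_one_iff.2 (by linarith)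
  have hterm : ∀ q : ℕ, exp (θ * q) * exp (-(q : ℝ) * ϑ) = exp (-(ϑ - θ)) ^ q := fun q => by
    rw [← exp_add, ← exp_nat_mul]; ring_nf
  simp_rw [hterm, ← Finset.Ico_add_one_right_eq_Icc]
  calc ∑ q ∈ Ico Q (N + 1), exp (-(ϑ - θ)) ^ q ≤ exp (-(ϑ - θ)) ^ Q / (1 - exp (-(ϑ - θ))) :=
        geom_sum_Ico_le_of_lt_one (exp_pos _).le hr
    _ = exp (-(ϑ - θ) * Q) / (1 - exp (-(ϑ - θ))) := by rw [← exp_nat_mul, mul_comm]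

section CondExp

variable {Ω : Type*} {m m0 : MeasurableSpace Ω} {μ : Measure Ω} {ζ : Ω → ℕ} {θ ϑ C : ℝ} {Q : ℕ}

/-- `ζ` is not assumed measurable: the tail events `{ζ ≥ q}`, `q ≥ Q`, are recovered as level sets
of `e^{θ 𝟙_Q(ζ)}`. -/
lemma aestronglyMeasurable_indicator_le_of_exp_mul_truncQ (hθ : 0 < θ)
    (hF : AEStronglyMeasurable (fun w => exp (θ * truncQ Q (ζ w))) μ) {q : ℕ} (hq : Q ≤ q) :
    AEStronglyMeasurable ({w | q ≤ ζ w}.indicator fun _ => (1 : ℝ)) μ := by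
  have hcomp : ({w | q ≤ ζ w}.indicator fun _ => (1 : ℝ)) =
      (Set.Ici (exp (θ * q))).indicator (fun _ => 1) ∘ fun w => exp (θ * truncQ Q (ζ w)) := by
    ext w
    simp only [Function.comp_apply, Set.indicator_apply, Set.mem_ofPred_eq, Set.mem_Ici,
      exp_le_exp, mul_le_mul_iff_right₀ hθ, Nat.cast_le, le_truncQ_iff hq]
  rw [hcomp]
  exact ((measurable_const.indicator measurableSet_Ici).comp_aemeasurable
    hF.aemeasurable).aestronglyMeasurable

variable [IsFiniteMeasure μ]

lemma setIntegral_le_of_ae_condExp_le_const (hm : m ≤ m0) {g : Ω → ℝ} (hg : Integrable g μ)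
    {b : ℝ} (hgb : μ[g | m] ≤ᵐ[μ] fun _ => b) {s : Set Ω} (hs : MeasurableSet[m] s) :
    ∫ x in s, g x ∂μ ≤ b * μ.real s := by
  rw [← setIntegral_condExp hm hg hs]
  calc ∫ x in s, (μ[g | m]) x ∂μ ≤ ∫ _ in s, b ∂μ :=
        setIntegral_mono_ae integrable_condExp.integrableOn (integrable_const b).integrableOn hgb
    _ = b * μ.real s := by rw [setIntegral_const, smul_eq_mul, mul_comm]

lemma ae_condExp_le_const_of_setIntegral_le (hm : m ≤ m0) {f : Ω → ℝ} (hf : Integrable f μ)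
    {c : ℝ} (hfc : ∀ s, MeasurableSet[m] s → ∫ x in s, f x ∂μ ≤ c * μ.real s) :
    μ[f | m] ≤ᵐ[μ] fun _ => c := by
  refine ae_le_of_ae_le_trim (hm := hm) <| ae_le_of_forall_setIntegral_le
    (integrable_condExp.trim hm stronglyMeasurable_condExp) (integrable_const c) fun s hs _ => ?_
  rw [← setIntegral_trim hm stronglyMeasurable_condExp hs,
    ← setIntegral_trim hm stronglyMeasurable_const hs, setIntegral_condExp hm hf hs,
    setIntegral_const, smul_eq_mul, mul_comm]
  exact hfc s hs

lemma setIntegral_min_exp_mul_truncQ_le (hm : m ≤ m0) (hθϑ : θ < ϑ) (hC : 0 ≤ C)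
    (htail : ∀ q, Q ≤ q →
      μ[{w | q ≤ ζ w}.indicator fun _ => (1 : ℝ) | m] ≤ᵐ[μ] fun _ => C * exp (-(q : ℝ) * ϑ))
    (htail_int : ∀ q, Q ≤ q → Integrable ({w | q ≤ ζ w}.indicator fun _ => (1 : ℝ)) μ)
    {s : Set Ω} (hs : MeasurableSet[m] s) {N : ℕ} (hQN : Q ≤ N) :
    ∫ w in s, min (exp (θ * truncQ Q (ζ w))) (exp (θ * N)) ∂μ ≤
      (1 + C * exp (-(ϑ - θ) * Q) / (1 - exp (-(ϑ - θ)))) * μ.real s := by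
  set g : ℕ → Ω → ℝ := fun q => {w | q ≤ ζ w}.indicator fun _ => 1
  have hg_apply : ∀ q w, g q w = if q ≤ ζ w then 1 else 0 := fun q w => by
    simp only [g, Set.indicator_apply, Set.mem_ofPred_eq]
  have hsum_int : ∀ q ∈ Icc Q N, Integrable (fun w => exp (θ * q) * g q w) (μ.restrict s) :=
    fun q hq => ((htail_int q (mem_Icc.1 hq).1).restrict).const_mul _
  calc ∫ w in s, min (exp (θ * truncQ Q (ζ w))) (exp (θ * N)) ∂μ
      ≤ ∫ w in s, (1 + ∑ q ∈ Icc Q N, exp (θ * q) * g q w) ∂μ := by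
        refine integral_mono_of_nonneg (ae_of_all _ fun w => by positivity)
          ((integrable_const 1).add (integrable_finsetSum _ hsum_int)) (ae_of_all _ fun w => ?_)
        simpa only [hg_apply] using min_exp_mul_truncQ_le_one_add_sum θ hQN (ζ w)
    _ = μ.real s + ∑ q ∈ Icc Q N, exp (θ * q) * ∫ w in s, g q w ∂μ := by
        rw [integral_add (integrable_const 1) (integrable_finsetSum _ hsum_int),
          integral_finsetSum _ hsum_int, setIntegral_const, smul_eq_mul, mul_one]
        simp only [integral_const_mul]
    _ ≤ μ.real s + ∑ q ∈ Icc Q N, exp (θ * q) * (C * exp (-(q : ℝ) * ϑ) * μ.real s) := by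
        gcongr with q hq
        exact setIntegral_le_of_ae_condExp_le_const hm (htail_int q (mem_Icc.1 hq).1)
          (htail q (mem_Icc.1 hq).1) hs
    _ = μ.real s + C * μ.real s * ∑ q ∈ Icc Q N, exp (θ * q) * exp (-(q : ℝ) * ϑ) := by
        rw [mul_sum]; congr 1; exact sum_congr rfl fun q _ => by ring
    _ ≤ μ.real s + C * μ.real s * (exp (-(ϑ - θ) * Q) / (1 - exp (-(ϑ - θ)))) := by
        gcongr
        exact sum_Icc_exp_mul_exp_le hθϑ Q N
    _ = (1 + C * exp (-(ϑ - θ) * Q) / (1 - exp (-(ϑ - θ)))) * μ.real s := by ring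

theorem ae_condExp_exp_mul_truncQ_le (hm : m ≤ m0) (hθ : 0 < θ) (hθϑ : θ < ϑ) (hC : 0 ≤ C)
    (htail : ∀ q, Q ≤ q →
      μ[{w | q ≤ ζ w}.indicator fun _ => (1 : ℝ) | m] ≤ᵐ[μ] fun _ => C * exp (-(q : ℝ) * ϑ)) :
    μ[fun w => exp (θ * truncQ Q (ζ w)) | m] ≤ᵐ[μ]
      fun _ => 1 + C * exp (-(ϑ - θ) * Q) / (1 - exp (-(ϑ - θ))) := by
  set F : Ω → ℝ := fun w => exp (θ * truncQ Q (ζ w))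
  by_cases hF : Integrable F μ
  swap
  · rw [condExp_of_not_integrable hF]
    have hden : 0 < 1 - exp (-(ϑ - θ)) := sub_pos.2 (exp_lt_one_iff.2 (by linarith))
    have := div_nonneg (mul_nonneg hC (exp_pos (-(ϑ - θ) * Q)).le) hden.le
    exact ae_of_all _ fun _ => by simp only [Pi.zero_apply]; linarith
  have htail_int : ∀ q, Q ≤ q → Integrable ({w | q ≤ ζ w}.indicator fun _ => (1 : ℝ)) μ :=
    fun q hq => .of_bound (aestronglyMeasurable_indicator_le_of_exp_mul_truncQ hθ hF.1 hq) 1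
      (ae_of_all _ fun w => by unfold Set.indicator; split_ifs <;> simp)
  refine ae_condExp_le_const_of_setIntegral_le hm hF fun s hs => ?_
  have hlim : Tendsto (fun N : ℕ => ∫ w in s, min (F w) (exp (θ * N)) ∂μ) atTop
      (𝓝 (∫ w in s, F w ∂μ)) := by
    refine integral_tendsto_of_tendsto_of_monotone
      (fun N => (hF.inf (integrable_const (exp (θ * N)))).restrict) hF.restrict
      (ae_of_all _ fun w N M hNM => ?_) (ae_of_all _ fun w => ?_)
    · dsimp only
      gcongr
    · refine tendsto_atTop_of_eventually_const (i₀ := truncQ Q (ζ w)) fun N hN => ?_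
      exact min_eq_left (exp_le_exp.2 (by gcongr))
  exact le_of_tendsto hlim (eventually_atTop.2 ⟨Q, fun N hN =>
    setIntegral_min_exp_mul_truncQ_le hm hθϑ hC htail htail_int hs hN⟩)

end CondExp

theorem stmt_1_general
    {W : Type*} [m0 : MeasurableSpace W] (μ : Measure W) [IsProbabilityMeasure μ]
    (𝓕 : MeasurableSpace W) (hle : 𝓕 ≤ m0)
    (ξ η : W → ℕ)
    (ϑ₀ C₀ : ℝ) (hϑ₀ : 0 < ϑ₀) (hC₀ : 1 ≤ C₀)
    (hcond : ∀ q : ℕ, 1 ≤ q →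
      ∀ᵐ w ∂μ,
        (μ[Set.indicator {w | η w + q ≤ ξ w} (fun _ => (1 : ℝ)) | 𝓕]) w
          ≤ C₀ * Real.exp (-(q : ℝ) * ϑ₀)) :
    ∀ Q : ℕ, 1 ≤ Q →
      ∀ᵐ w ∂μ,
        (μ[fun w => Real.exp ((ϑ₀ / 2) * (truncQ Q (ξ w - η w) : ℝ)) | 𝓕]) w
          ≤ (1 - Real.exp (-ϑ₀ / 2) + C₀ * Real.exp (-(Q : ℝ) * ϑ₀ / 2)) /
              (1 - Real.exp (-ϑ₀ / 2)) := by
  intro Q hQ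
  have htail : ∀ q, Q ≤ q → μ[{w | q ≤ ξ w - η w}.indicator fun _ => (1 : ℝ) | 𝓕] ≤ᵐ[μ]
      fun _ => C₀ * exp (-(q : ℝ) * ϑ₀) := fun q hq => by
    -- valid for `q ≥ 1` despite the truncated subtraction
    have hset : {w | q ≤ ξ w - η w} = {w | η w + q ≤ ξ w} := by
      ext w; simp only [Set.mem_ofPred_eq]; omega
    rw [hset]
    exact hcond q (hQ.trans hq)
  have hr : 0 < 1 - exp (-ϑ₀ / 2) := sub_pos.2 (exp_lt_one_iff.2 (by linarith))
  have hbound : (1 - exp (-ϑ₀ / 2) + C₀ * exp (-(Q : ℝ) * ϑ₀ / 2)) / (1 - exp (-ϑ₀ / 2)) =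
      1 + C₀ * exp (-(ϑ₀ - ϑ₀ / 2) * Q) / (1 - exp (-(ϑ₀ - ϑ₀ / 2))) := by
    rw [add_div, div_self hr.ne', mul_div_assoc]; ring_nf
  rw [hbound]
  exact ae_condExp_exp_mul_truncQ_le hle (by positivity) (by linarith) (by linarith) htail

/-- One-step conditional exponential moment bound used in the large deviation lemma. -/
theorem stmt_1
    {W : Type*} [m0 : MeasurableSpace W] (μ : Measure W) [IsProbabilityMeasure μ]
    (𝓕 : MeasurableSpace W) (hle : 𝓕 ≤ m0)
    (ξ η : W → ℕ) (hη : Measurable[𝓕] η)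
    (ϑ₀ C₀ : ℝ) (hϑ₀ : 0 < ϑ₀) (hC₀ : 1 ≤ C₀)
    (hmono : ∀ᵐ w ∂μ, η w ≤ ξ w)
    (hcond : ∀ q : ℕ, 1 ≤ q →
      ∀ᵐ w ∂μ,
        (μ[Set.indicator {w | η w + q ≤ ξ w} (fun _ => (1 : ℝ)) | 𝓕]) w
          ≤ C₀ * Real.exp (-(q : ℝ) * ϑ₀)) :
    ∀ Q : ℕ, 1 ≤ Q →
      ∀ᵐ w ∂μ,
        (μ[fun w => Real.exp ((ϑ₀ / 2) * (truncQ Q (ξ w - η w) : ℝ)) | 𝓕]) w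
          ≤ (1 - Real.exp (-ϑ₀ / 2) + C₀ * Real.exp (-(Q : ℝ) * ϑ₀ / 2)) /
              (1 - Real.exp (-ϑ₀ / 2)) :=
  stmt_1_general (m0 := m0) μ 𝓕 hle ξ η ϑ₀ C₀ hϑ₀ hC₀ hcond
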